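/- Every discrete curve with constant step length can be represented by torsion and bond angles: if {z₁, …, z_m} ⊂ ℝ³ satisfies ‖z_{j+1} − z_j‖ = δ for all j ∈ {1, …, m−1} and consecutive direction vectors t_j = (z_{j+1} − z_j)/δ satisfy t_{j−1} × t_j ≠ 0 for all j ∈ {2, …, m−1}, then there exist angles Θ = (θ₁, …, θ_{m−2}), Ψ = (ψ₁, …, ψ_{m−2}), a point ẑ ∈ ℝ³ and a frame F̂ ∈ SO(3) such that the discrete Frenet recursion with these parameters reproduces the point cloud {z₁, …, z_m}. -/

import Mathlib

open Real Matrix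

noncomputable def Rmat (θ ψ : ℝ) : Matrix (Fin 3) (Fin 3) ℝ :=
  !![Real.cos ψ * Real.cos θ, Real.cos ψ * Real.sin θ, -Real.sin ψ;
     -Real.sin θ, Real.cos θ, 0;
     Real.sin ψ * Real.cos θ, Real.sin ψ * Real.sin θ, Real.cos ψ]

lemma sph (a b c : ℝ) (h : a^2 + b^2 + c^2 = 1) :
    ∃ θ ψ : ℝ, Real.sin ψ * Real.cos θ = a ∧ Real.sin ψ * Real.sin θ = b ∧ Real.cos ψ = c := by
  have hc1 : -1 ≤ c := by nlinarith [sq_nonneg a, sq_nonneg b, sq_nonneg (c+1)]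
  have hc2 : c ≤ 1 := by nlinarith [sq_nonneg a, sq_nonneg b, sq_nonneg (c-1)]
  set r := Real.sqrt (a^2 + b^2) with hr
  have hr2 : r^2 = a^2 + b^2 := Real.sq_sqrt (by positivity)
  have hsin : Real.sin (Real.arccos c) = r := by
    rw [Real.sin_arccos, hr]; congr 1; linarith
  obtain ⟨θ, hθa, hθb⟩ : ∃ θ, r * Real.cos θ = a ∧ r * Real.sin θ = b := by
    rcases eq_or_ne r 0 with h0 | h0
    · have hab : a^2 + b^2 = 0 := by rw [← hr2, h0]; ring
      have ha : a = 0 := by nlinarith [sq_nonneg a, sq_nonneg b]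
      have hb : b = 0 := by nlinarith [sq_nonneg a, sq_nonneg b]
      exact ⟨0, by simp [h0, ha], by simp [h0, hb]⟩
    · have habs : ‖(⟨a, b⟩ : ℂ)‖ = r := by
        rw [Complex.norm_def, Complex.normSq_mk, hr]; ring_nf
      refine ⟨Complex.arg ⟨a, b⟩, ?_, ?_⟩
      · have := Complex.norm_mul_cos_arg ⟨a, b⟩
        rwa [habs] at this
      · have := Complex.norm_mul_sin_arg ⟨a, b⟩
        rwa [habs] at this
  exact ⟨θ, Real.arccos c, by rw [hsin]; exact hθa, by rw [hsin]; exact hθb,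
    Real.cos_arccos hc1 hc2⟩

lemma Rmat_orth (θ ψ : ℝ) : (Rmat θ ψ)ᵀ * Rmat θ ψ = 1 := by
  have h1 := Real.sin_sq_add_cos_sq θ
  have h2 := Real.sin_sq_add_cos_sq ψ
  ext i j
  fin_cases i <;> fin_cases j <;>
    simp [Rmat, Matrix.mul_apply, Matrix.transpose_apply, Fin.sum_univ_three, Matrix.one_apply, Matrix.vecHead, Matrix.vecTail] <;>
    first
    | ring1
    | linear_combination h2
    | linear_combination h1
    | linear_combination (Real.cos θ)^2 * h2 + h1
    | linear_combination (Real.sin θ)^2 * h2 + h1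
    | linear_combination Real.cos θ * Real.sin θ * h2
    | nlinarith

lemma Rmat_det (θ ψ : ℝ) : (Rmat θ ψ).det = 1 := by
  have h1 := Real.sin_sq_add_cos_sq θ
  have h2 := Real.sin_sq_add_cos_sq ψ
  simp [Rmat, Matrix.det_fin_three]
  nlinarith [h1, h2, sq_nonneg (Real.sin θ), sq_nonneg (Real.cos θ)]

lemma rowA (M : Matrix (Fin 3) (Fin 3) ℝ) (hM : Mᵀ * M = 1) (v : Fin 3 → ℝ)
    (hv : ∑ k, (v k)^2 = 1) :
    ∃ p : ℝ × ℝ, ∀ k, (Rmat p.1 p.2 * M) 2 k = v k := by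
  set c : Fin 3 → ℝ := M *ᵥ v with hc
  have hMv : Mᵀ *ᵥ c = v := by
    rw [hc, Matrix.mulVec_mulVec, hM, Matrix.one_mulVec]
  have hcc : c 0 ^ 2 + c 1 ^ 2 + c 2 ^ 2 = 1 := by
    have h1 : c ⬝ᵥ c = v ⬝ᵥ v := by
      calc c ⬝ᵥ c = c ⬝ᵥ (M *ᵥ v) := by rw [← hc]
        _ = (c ᵥ* M) ⬝ᵥ v := by rw [Matrix.dotProduct_mulVec]
        _ = (Mᵀ *ᵥ c) ⬝ᵥ v := by rw [Matrix.mulVec_transpose]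
        _ = v ⬝ᵥ v := by rw [hMv]
    have h2 : v ⬝ᵥ v = 1 := by
      rw [← hv]; simp [dotProduct, sq]
    have h3 : c ⬝ᵥ c = c 0 * c 0 + c 1 * c 1 + c 2 * c 2 := by
      simp [dotProduct, Fin.sum_univ_three]
    nlinarith [h1, h2, h3]
  obtain ⟨θ, ψ, hA, hB, hC⟩ := sph (c 0) (c 1) (c 2) hcc
  refine ⟨(θ, ψ), fun k => ?_⟩
  have : (Rmat θ ψ * M) 2 k =
      Real.sin ψ * Real.cos θ * M 0 k + Real.sin ψ * Real.sin θ * M 1 k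
        + Real.cos ψ * M 2 k := by
    simp [Rmat, Matrix.mul_apply, Fin.sum_univ_three]
  rw [this, hA, hB, hC, ← hMv]
  simp [Matrix.mulVec, dotProduct, Fin.sum_univ_three, Matrix.transpose_apply]
  ring

open Classical in
noncomputable def chooseAngles (M : Matrix (Fin 3) (Fin 3) ℝ) (v : Fin 3 → ℝ) : ℝ × ℝ :=
  if h : ∃ p : ℝ × ℝ, ∀ k, (Rmat p.1 p.2 * M) 2 k = v k then h.choose else (0, 0)

lemma chooseAngles_spec (M : Matrix (Fin 3) (Fin 3) ℝ) (hM : Mᵀ * M = 1) (v : Fin 3 → ℝ)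
    (hv : ∑ k, (v k)^2 = 1) :
    ∀ k, (Rmat (chooseAngles M v).1 (chooseAngles M v).2 * M) 2 k = v k := by
  have h := rowA M hM v hv
  unfold chooseAngles
  rw [dif_pos h]
  exact h.choose_spec

noncomputable def frenetF (v : ℕ → Fin 3 → ℝ) (M₀ : Matrix (Fin 3) (Fin 3) ℝ) :
    ℕ → Matrix (Fin 3) (Fin 3) ℝ
  | 0 => M₀
  | j + 1 =>
    Rmat (chooseAngles (frenetF v M₀ j) (v (j + 1))).1
         (chooseAngles (frenetF v M₀ j) (v (j + 1))).2 * frenetF v M₀ j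

lemma frenetF_so3 (v : ℕ → Fin 3 → ℝ) (M₀ : Matrix (Fin 3) (Fin 3) ℝ)
    (h0 : M₀ᵀ * M₀ = 1) (hd : M₀.det = 1) :
    ∀ j, (frenetF v M₀ j)ᵀ * frenetF v M₀ j = 1 ∧ (frenetF v M₀ j).det = 1 := by
  intro j
  induction j with
  | zero => exact ⟨h0, hd⟩
  | succ n ih =>
    constructor
    · show (Rmat _ _ * _)ᵀ * (Rmat _ _ * _) = 1
      rw [Matrix.transpose_mul, Matrix.mul_assoc, ← Matrix.mul_assoc (Rmat _ _)ᵀ,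
        Rmat_orth, Matrix.one_mul, ih.1]
    · show (Rmat (chooseAngles (frenetF v M₀ n) (v (n + 1))).1
          (chooseAngles (frenetF v M₀ n) (v (n + 1))).2 * frenetF v M₀ n).det = 1
      rw [Matrix.det_mul, Rmat_det, ih.2, one_mul]

/-- every discrete curve with constant step length (and nondegenerate
consecutive tangents) is reproduced by the discrete Frenet recursion for suitable
torsion/bond angles, initial point and initial frame in SO(3). -/
theorem discrete_curve_representation (m : ℕ) (hm : 3 ≤ m) (δ : ℝ) (hδ : 0 < δ)
    (j₀ : ℕ) (hj₀ : j₀ + 1 < m)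
    (z : ℕ → EuclideanSpace ℝ (Fin 3))
    (hlen : ∀ j, j + 1 < m → ‖z (j + 1) - z j‖ = δ)
    (hnd : ∀ j, 1 ≤ j → j + 1 < m →
      crossProduct (fun k => δ⁻¹ * (z j k - z (j - 1) k))
        (fun k => δ⁻¹ * (z (j + 1) k - z j k)) ≠ 0) :
    ∃ θ ψ : ℕ → ℝ, ∃ F : ℕ → Matrix (Fin 3) (Fin 3) ℝ,
      ((F j₀)ᵀ * F j₀ = 1 ∧ (F j₀).det = 1) ∧
      (∀ j, j + 1 < m →
        z (j + 1) = z j + δ • (EuclideanSpace.equiv (Fin 3) ℝ).symm (F j 2)) ∧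
      (∀ j, j + 2 < m → F (j + 1) = Rmat (θ j) (ψ j) * F j) := by
  classical
  have hδ' : δ ≠ 0 := ne_of_gt hδ
  set t : ℕ → Fin 3 → ℝ := fun j k => δ⁻¹ * (z (j + 1) k - z j k) with ht
  have hunit : ∀ j, j + 1 < m → ∑ k, (t j k) ^ 2 = 1 := by
    intro j hj
    have hnn : 0 ≤ ∑ k, ((z (j + 1) - z j) k) ^ 2 :=
      Finset.sum_nonneg fun _ _ => sq_nonneg _
    have hl := hlen j hj
    rw [EuclideanSpace.norm_eq] at hl
    simp only [Real.norm_eq_abs, sq_abs] at hl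
    have hsum : ∑ k, ((z (j + 1) - z j) k) ^ 2 = δ ^ 2 := by
      rw [← hl, Real.sq_sqrt hnn]
    have happ : ∀ k, (z (j + 1) - z j) k = z (j + 1) k - z j k := fun k => rfl
    calc ∑ k, (t j k) ^ 2 = ∑ k, δ⁻¹ ^ 2 * ((z (j + 1) - z j) k) ^ 2 := by
          simp only [ht, happ, mul_pow]
      _ = δ⁻¹ ^ 2 * ∑ k, ((z (j + 1) - z j) k) ^ 2 := by rw [Finset.mul_sum]
      _ = δ⁻¹ ^ 2 * δ ^ 2 := by rw [hsum]
      _ = 1 := by field_simp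
  -- initial frame
  set M₀ : Matrix (Fin 3) (Fin 3) ℝ :=
    Rmat (chooseAngles 1 (t 0)).1 (chooseAngles 1 (t 0)).2 * 1 with hM₀
  have hM₀1 : M₀ᵀ * M₀ = 1 := by rw [hM₀, mul_one]; exact Rmat_orth _ _
  have hM₀2 : M₀.det = 1 := by rw [hM₀, mul_one]; exact Rmat_det _ _
  set F : ℕ → Matrix (Fin 3) (Fin 3) ℝ := frenetF t M₀ with hF
  have hso3 := frenetF_so3 t M₀ hM₀1 hM₀2
  have hrow : ∀ j, j + 1 < m → ∀ k, F j 2 k = t j k := by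
    intro j hj k
    match j with
    | 0 =>
      have h1 : (1 : Matrix (Fin 3) (Fin 3) ℝ)ᵀ * 1 = 1 := by simp
      exact chooseAngles_spec 1 h1 (t 0) (hunit 0 hj) k
    | n + 1 =>
      have hs : F (n + 1) =
          Rmat (chooseAngles (frenetF t M₀ n) (t (n + 1))).1
            (chooseAngles (frenetF t M₀ n) (t (n + 1))).2 * frenetF t M₀ n := rfl
      rw [hs]
      exact chooseAngles_spec (frenetF t M₀ n) (hso3 n).1 (t (n + 1)) (hunit (n + 1) hj) k
  refine ⟨fun j => (chooseAngles (F j) (t (j + 1))).1,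
    fun j => (chooseAngles (F j) (t (j + 1))).2, F, hso3 j₀, ?_, fun j _ => rfl⟩
  intro j hj
  have key := hrow j hj
  ext k
  have h1 : (z j + δ • (EuclideanSpace.equiv (Fin 3) ℝ).symm (F j 2)) k
      = z j k + δ * (F j 2 k) := rfl
  rw [h1, key k, ht]
  simp only
  field_simp
  ring
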